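/- arXiv:2501.04667 — 4 statements merged into one kernel-verified Lean document; each statement's English description precedes it below -/
import Mathlib

section
/- Let ℓ : ℝ^d → ℝ be measurable with ℓ ≤ 0, and assume that ∫_{ℝ^d} exp(ℓ(ξ)/ω) dξ ∈ (0,∞) and ∫_{ℝ^d} |ℓ(ξ)| exp(ℓ(ξ)/ω) dξ < ∞ for every ω > 0. Then for every ω₀ ∈ (0, ∞), the total variation distance ‖g_ω − g_{ω₀}‖_TV tends to 0 as ω → ω₀; that is, the map ω ↦ g_ω is continuous on (0, ∞) with respect to the total variation distance. -/
open MeasureTheory Real Filter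

/-- Continuity of the Gibbs measure in the temperature: the total variation distance
`‖g_ω − g_{ω₀}‖_TV = (1/2)∫|g_ω − g_{ω₀}|` (Scheffé) tends to `0` as `ω → ω₀` within
`(0, ∞)`. -/
theorem gibbs_tv_continuous
    (d : ℕ) (ℓ : (Fin d → ℝ) → ℝ) (hℓ : Measurable ℓ) (hle : ∀ ξ, ℓ ξ ≤ 0)
    (hint : ∀ ω : ℝ, 0 < ω → Integrable (fun ξ => Real.exp (ℓ ξ / ω)))
    (hpos : ∀ ω : ℝ, 0 < ω → 0 < ∫ ξ, Real.exp (ℓ ξ / ω))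
    (hintℓ : ∀ ω : ℝ, 0 < ω → Integrable (fun ξ => |ℓ ξ| * Real.exp (ℓ ξ / ω))) :
    ∀ ω₀ : ℝ, 0 < ω₀ →
      Tendsto (fun ω : ℝ => (1/2) * ∫ ξ,
          |Real.exp (ℓ ξ / ω) / (∫ x, Real.exp (ℓ x / ω))
            - Real.exp (ℓ ξ / ω₀) / (∫ x, Real.exp (ℓ x / ω₀))|)
        (nhdsWithin ω₀ (Set.Ioi 0)) (nhds 0) := by
  intro ω₀ hω₀
  set Z : ℝ → ℝ := fun ω => ∫ x, Real.exp (ℓ x / ω) with hZ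
  set L := nhdsWithin ω₀ (Set.Ioi (0:ℝ)) with hLdef
  -- monotonicity of exp(ℓ ξ / ·)
  have hexp_mono : ∀ (ξ : Fin d → ℝ) {a b : ℝ}, 0 < a → a ≤ b →
      Real.exp (ℓ ξ / a) ≤ Real.exp (ℓ ξ / b) := by
    intro ξ a b ha hab
    apply Real.exp_le_exp.2
    rw [div_eq_mul_inv, div_eq_mul_inv]
    exact mul_le_mul_of_nonpos_left (inv_anti₀ ha hab) (hle ξ)
  have hZmono : ∀ {a b : ℝ}, 0 < a → a ≤ b → Z a ≤ Z b := by
    intro a b ha hab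
    exact integral_mono (hint a ha) (hint b (lt_of_lt_of_le ha hab))
      (fun ξ => hexp_mono ξ ha hab)
  have hZhalf : 0 < Z (ω₀ / 2) := hpos _ (by linarith)
  have hZ0 : 0 < Z ω₀ := hpos _ hω₀
  -- eventually ω is in a good compact-ish window
  have hmem : ∀ᶠ ω in L, ω ∈ Set.Icc (ω₀/2) (2*ω₀) ∧ 0 < ω := by
    have h1 : ∀ᶠ ω in L, ω ∈ Set.Icc (ω₀/2) (2*ω₀) :=
      nhdsWithin_le_nhds (Icc_mem_nhds (by linarith) (by linarith))
    have h2 : ∀ᶠ ω in L, (0:ℝ) < ω := self_mem_nhdsWithin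
    exact h1.and h2
  have hmeas : ∀ ω : ℝ, Measurable fun ξ => Real.exp (ℓ ξ / ω) := fun ω =>
    Real.measurable_exp.comp (hℓ.div_const ω)
  -- continuity of Z at ω₀ within (0, ∞)
  have hZcont : Tendsto Z L (nhds (Z ω₀)) := by
    apply tendsto_integral_filter_of_dominated_convergence
      (fun ξ => Real.exp (ℓ ξ / (2*ω₀)))
    · exact Filter.Eventually.of_forall fun ω => (hmeas ω).aestronglyMeasurable
    · filter_upwards [hmem] with ω hω
      refine ae_of_all _ fun ξ => ?_
      rw [Real.norm_eq_abs, abs_of_pos (Real.exp_pos _)]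
      exact hexp_mono ξ hω.2 hω.1.2
    · exact hint (2*ω₀) (by linarith)
    · refine ae_of_all _ fun ξ => ?_
      have hc : ContinuousAt (fun ω : ℝ => Real.exp (ℓ ξ / ω)) ω₀ :=
        Real.continuous_exp.continuousAt.comp
          (continuousAt_const.div continuousAt_id hω₀.ne')
      exact hc.continuousWithinAt
  -- main dominated convergence
  have main : Tendsto (fun ω : ℝ => ∫ ξ,
      |Real.exp (ℓ ξ / ω) / Z ω - Real.exp (ℓ ξ / ω₀) / Z ω₀|) L
      (nhds (∫ _ : Fin d → ℝ, (0:ℝ))) := by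
    apply tendsto_integral_filter_of_dominated_convergence
      (fun ξ => Real.exp (ℓ ξ / (2*ω₀)) / Z (ω₀/2) + Real.exp (ℓ ξ / ω₀) / Z ω₀)
    · refine Filter.Eventually.of_forall fun ω => Measurable.aestronglyMeasurable ?_
      exact (((hmeas ω).div_const _).sub ((hmeas ω₀).div_const _)).abs
    · filter_upwards [hmem] with ω hω
      refine ae_of_all _ fun ξ => ?_
      rw [Real.norm_eq_abs, abs_abs]
      refine (abs_sub _ _).trans ?_
      have h1 : |Real.exp (ℓ ξ / ω) / Z ω| ≤ Real.exp (ℓ ξ / (2*ω₀)) / Z (ω₀/2) := by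
        rw [abs_of_nonneg (div_nonneg (Real.exp_pos _).le
          (hZhalf.trans_le (hZmono (by linarith) hω.1.1)).le)]
        exact div_le_div₀ (Real.exp_pos _).le (hexp_mono ξ hω.2 hω.1.2) hZhalf
          (hZmono (by linarith) hω.1.1)
      have h2 : |Real.exp (ℓ ξ / ω₀) / Z ω₀| = Real.exp (ℓ ξ / ω₀) / Z ω₀ :=
        abs_of_nonneg (div_nonneg (Real.exp_pos _).le hZ0.le)
      linarith
    · exact ((hint (2*ω₀) (by linarith)).div_const _).add
        ((hint ω₀ hω₀).div_const _)
    · refine ae_of_all _ fun ξ => ?_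
      have hnum : Tendsto (fun ω : ℝ => Real.exp (ℓ ξ / ω)) L
          (nhds (Real.exp (ℓ ξ / ω₀))) := by
        have hc : ContinuousAt (fun ω : ℝ => Real.exp (ℓ ξ / ω)) ω₀ :=
          Real.continuous_exp.continuousAt.comp
            (continuousAt_const.div continuousAt_id hω₀.ne')
        exact hc.continuousWithinAt
      have hA : Tendsto (fun ω : ℝ => Real.exp (ℓ ξ / ω) / Z ω) L
          (nhds (Real.exp (ℓ ξ / ω₀) / Z ω₀)) := hnum.div hZcont hZ0.ne'
      have := (hA.sub (tendsto_const_nhds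
        (x := Real.exp (ℓ ξ / ω₀) / Z ω₀))).abs
      simpa using this
  simp only [integral_zero] at main
  have := main.const_mul (1/2 : ℝ)
  simpa using this
end

section
/- Let ℓ : ℝ^d → ℝ be measurable with ℓ ≤ 0, and assume that Z(ω) = ∫_{ℝ^d} exp(ℓ(ξ)/ω) dξ ∈ (0,∞) and ∫_{ℝ^d} |ℓ(ξ)| exp(ℓ(ξ)/ω) dξ < ∞ for every ω > 0. Then Z is differentiable on (0, ∞) with Z′(ω) = −ω^{−2} Z(ω) ∫ ℓ dg_ω, and for every fixed ξ ∈ ℝ^d the map ω ↦ g_ω(ξ) is differentiable on (0, ∞) with derivative (d/dω) g_ω(ξ) = (g_ω(ξ)/ω²) (∫ ℓ dg_ω − ℓ(ξ)). -/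
open MeasureTheory Real

/-!
Differentiate `Z(w) = ∫ exp(ℓ/w)` under the integral sign. The integrand has `w`-derivative
`-(w²)⁻¹ ℓ exp(ℓ/w)`; since `ℓ ≤ 0`, `exp(ℓ/w)` increases with `w`, so on `(ω/2, 2ω)` this
derivative is dominated by `(ω/2)⁻² |ℓ| exp(ℓ/(2ω))`, which is integrable. The formula for
`g_ω(ξ) = exp(ℓ(ξ)/ω)/Z(ω)` then follows from the quotient rule.
-/

noncomputable section

variable {α : Type*} [MeasurableSpace α]

def partitionFn (μ : Measure α) (ℓ : α → ℝ) (ω : ℝ) : ℝ :=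
  ∫ ξ, exp (ℓ ξ / ω) ∂μ

def gibbsDensity (μ : Measure α) (ℓ : α → ℝ) (ω : ℝ) (ξ : α) : ℝ :=
  exp (ℓ ξ / ω) / partitionFn μ ℓ ω

lemma hasDerivAt_exp_div (c : ℝ) {w : ℝ} (hw : w ≠ 0) :
    HasDerivAt (fun w => exp (c / w)) (-(w ^ 2)⁻¹ * (c * exp (c / w))) w := by
  have h := ((hasDerivAt_inv hw).const_mul c).exp
  simp only [div_eq_mul_inv] at h ⊢
  convert h using 1
  ring

lemma exp_div_le_exp_div_of_nonpos {c w v : ℝ} (hc : c ≤ 0) (hw : 0 < w) (hwv : w ≤ v) :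
    exp (c / w) ≤ exp (c / v) := by
  rw [exp_le_exp, div_le_div_iff₀ hw (hw.trans_le hwv)]
  nlinarith

lemma norm_deriv_exp_div_le {c ω w : ℝ} (hc : c ≤ 0) (hω : 0 < ω)
    (hw : w ∈ Set.Ioo (ω / 2) (2 * ω)) :
    ‖-(w ^ 2)⁻¹ * (c * exp (c / w))‖ ≤ ((ω / 2) ^ 2)⁻¹ * (|c| * exp (c / (2 * ω))) := by
  have hw₀ : 0 < w := by linarith [hw.1]
  rw [norm_mul, norm_neg, norm_mul, norm_inv, norm_pow, Real.norm_eq_abs, Real.norm_eq_abs,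
    Real.norm_eq_abs, abs_of_pos hw₀, abs_of_pos (exp_pos _)]
  have hinv : (w ^ 2)⁻¹ ≤ ((ω / 2) ^ 2)⁻¹ := by gcongr; exact hw.1.le
  have hexp := exp_div_le_exp_div_of_nonpos hc hw₀ hw.2.le
  gcongr

variable {μ : Measure α} {ℓ : α → ℝ}

lemma hasDerivAt_partitionFn (hℓ : AEMeasurable ℓ μ) (hle : ∀ᵐ ξ ∂μ, ℓ ξ ≤ 0)
    {ω : ℝ} (hω : 0 < ω) (hint : Integrable (fun ξ => exp (ℓ ξ / ω)) μ)
    (hintℓ : Integrable (fun ξ => |ℓ ξ| * exp (ℓ ξ / (2 * ω))) μ) :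
    HasDerivAt (partitionFn μ ℓ) (-(ω ^ 2)⁻¹ * ∫ ξ, ℓ ξ * exp (ℓ ξ / ω) ∂μ) ω := by
  have hmem : Set.Ioo (ω / 2) (2 * ω) ∈ nhds ω := Ioo_mem_nhds (by linarith) (by linarith)
  rw [← integral_const_mul]
  refine (hasDerivAt_integral_of_dominated_loc_of_deriv_le
    (F := fun w ξ => exp (ℓ ξ / w)) (F' := fun w ξ => -(w ^ 2)⁻¹ * (ℓ ξ * exp (ℓ ξ / w)))
    (bound := fun ξ => ((ω / 2) ^ 2)⁻¹ * (|ℓ ξ| * exp (ℓ ξ / (2 * ω))))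
    hmem (.of_forall fun w => (hℓ.div_const w).exp.aestronglyMeasurable) hint
    (((hℓ.mul (hℓ.div_const ω).exp).const_mul _).aestronglyMeasurable) ?_
    (hintℓ.const_mul _) ?_).2
  · filter_upwards [hle] with ξ hξ w hw using norm_deriv_exp_div_le hξ hω hw
  · refine .of_forall fun ξ w hw => hasDerivAt_exp_div (ℓ ξ) ?_
    linarith [hw.1]

lemma integral_mul_gibbsDensity (ω : ℝ) :
    ∫ ξ, ℓ ξ * gibbsDensity μ ℓ ω ξ ∂μ = (∫ ξ, ℓ ξ * exp (ℓ ξ / ω) ∂μ) / partitionFn μ ℓ ω := by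
  simp only [gibbsDensity, mul_div_assoc', integral_div]

lemma hasDerivAt_partitionFn_gibbsDensity (hℓ : AEMeasurable ℓ μ) (hle : ∀ᵐ ξ ∂μ, ℓ ξ ≤ 0)
    {ω : ℝ} (hω : 0 < ω) (hint : Integrable (fun ξ => exp (ℓ ξ / ω)) μ)
    (hintℓ : Integrable (fun ξ => |ℓ ξ| * exp (ℓ ξ / (2 * ω))) μ) (hZ : partitionFn μ ℓ ω ≠ 0) :
    HasDerivAt (partitionFn μ ℓ)
      (-(ω ^ 2)⁻¹ * partitionFn μ ℓ ω * ∫ ξ, ℓ ξ * gibbsDensity μ ℓ ω ξ ∂μ) ω := by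
  rw [integral_mul_gibbsDensity, mul_assoc, mul_div_cancel₀ _ hZ]
  exact hasDerivAt_partitionFn hℓ hle hω hint hintℓ

lemma hasDerivAt_gibbsDensity (hℓ : AEMeasurable ℓ μ) (hle : ∀ᵐ ξ ∂μ, ℓ ξ ≤ 0)
    {ω : ℝ} (hω : 0 < ω) (hint : Integrable (fun ξ => exp (ℓ ξ / ω)) μ)
    (hintℓ : Integrable (fun ξ => |ℓ ξ| * exp (ℓ ξ / (2 * ω))) μ) (hZ : partitionFn μ ℓ ω ≠ 0)
    (ξ : α) :
    HasDerivAt (fun w => gibbsDensity μ ℓ w ξ)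
      (gibbsDensity μ ℓ ω ξ / ω ^ 2 * ((∫ x, ℓ x * gibbsDensity μ ℓ ω x ∂μ) - ℓ ξ)) ω := by
  refine ((hasDerivAt_exp_div (ℓ ξ) hω.ne').div
    (hasDerivAt_partitionFn hℓ hle hω hint hintℓ) hZ).congr_deriv ?_
  rw [integral_mul_gibbsDensity, gibbsDensity]
  field_simp
  ring

end

/-- Differentiability in the temperature: `Z'(ω) = −ω⁻² Z(ω) ∫ ℓ dg_ω` and, for each
fixed `ξ`, `(d/dω) g_ω(ξ) = (g_ω(ξ)/ω²)(∫ ℓ dg_ω − ℓ(ξ))`, where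
`g_ω(ξ) = exp(ℓ(ξ)/ω)/Z(ω)`. -/
theorem gibbs_deriv_in_temperature
    (d : ℕ) (ℓ : (Fin d → ℝ) → ℝ) (hℓ : Measurable ℓ) (hle : ∀ ξ, ℓ ξ ≤ 0)
    (hint : ∀ ω : ℝ, 0 < ω → Integrable (fun ξ => Real.exp (ℓ ξ / ω)))
    (hpos : ∀ ω : ℝ, 0 < ω → 0 < ∫ ξ, Real.exp (ℓ ξ / ω))
    (hintℓ : ∀ ω : ℝ, 0 < ω → Integrable (fun ξ => |ℓ ξ| * Real.exp (ℓ ξ / ω))) :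
    ∀ ω : ℝ, 0 < ω →
      (HasDerivAt (fun w : ℝ => ∫ ξ, Real.exp (ℓ ξ / w))
        (-(ω ^ 2)⁻¹ * (∫ ξ, Real.exp (ℓ ξ / ω)) *
          (∫ ξ, ℓ ξ * (Real.exp (ℓ ξ / ω) / ∫ x, Real.exp (ℓ x / ω)))) ω)
      ∧ ∀ ξ, HasDerivAt (fun w : ℝ => Real.exp (ℓ ξ / w) / ∫ x, Real.exp (ℓ x / w))
          ((Real.exp (ℓ ξ / ω) / ∫ x, Real.exp (ℓ x / ω)) / ω ^ 2 *
            ((∫ x, ℓ x * (Real.exp (ℓ x / ω) / ∫ y, Real.exp (ℓ y / ω))) - ℓ ξ)) ω := by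
  intro ω hω
  have hle' : ∀ᵐ ξ, ℓ ξ ≤ 0 := .of_forall hle
  have hintℓ' := hintℓ (2 * ω) (by positivity)
  have hZ := (hpos ω hω).ne'
  exact ⟨hasDerivAt_partitionFn_gibbsDensity hℓ.aemeasurable hle' hω (hint ω hω) hintℓ' hZ,
    hasDerivAt_gibbsDensity hℓ.aemeasurable hle' hω (hint ω hω) hintℓ' hZ⟩
end

section
/- Let ℓ : ℝ^d → ℝ be continuous with ℓ ≤ 0, attaining its maximum 0 exactly on the finite nonempty set {ξ*_1, …, ξ*_I}, and with ∫_{ℝ^d} exp(ℓ(ξ)/ω) dξ < ∞ for every ω > 0. Fix ε > 0 with ε < min_{i ≠ j} ‖ξ*_i − ξ*_j‖ when I ≥ 2, set K_ε = ∪_{i=1}^I B_ε(ξ*_i), and assume sup_{ξ ∈ ℝ^d ∖ K_ε} ℓ(ξ) < 0. Then for every continuous bounded function f : ℝ^d → ℝ, the ratio (∫_{ℝ^d ∖ K_ε} f(ξ) exp(ℓ(ξ)/ω) dξ) / Z(ω) tends to 0 as ω → 0⁺, where Z(ω) = ∫_{ℝ^d} exp(ℓ(ξ)/ω) dξ. 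-/
open MeasureTheory Real Filter

open scoped Topology ENNReal

/-!
Outside `K_ε` we have `ℓ ≤ η < 0`, so for `ω ≤ 1` the weight `e^{ℓ/ω}` is at most
`e^{η (1/ω - 1)} e^{ℓ}` and the numerator is `O(e^{η/ω})`. Near a maximizer `ℓ > η/2` on a
small ball, so `Z(ω) ≥ c e^{η/(2ω)}`. Hence the ratio is `O(e^{η/(2ω)})`, which tends to `0`.
-/

lemma exp_div_le_exp_mul_exp {x η ω : ℝ} (hx : x ≤ η) (hω0 : 0 < ω) (hω1 : ω ≤ 1) :
    exp (x / ω) ≤ exp (η * (ω⁻¹ - 1)) * exp x := by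
  have hω : 0 ≤ ω⁻¹ - 1 := sub_nonneg.2 ((one_le_inv₀ hω0).2 hω1)
  have hsplit : x / ω = x * (ω⁻¹ - 1) + x := by field_simp; ring
  rw [← exp_add, exp_le_exp, hsplit]
  linarith [mul_le_mul_of_nonneg_right hx hω]

lemma tendsto_mul_exp_div_nhdsGT_zero (B : ℝ) {c : ℝ} (hc : c < 0) :
    Tendsto (fun ω => B * exp (c / ω)) (𝓝[>] 0) (𝓝 0) := by
  simpa [div_eq_mul_inv] using
    (tendsto_exp_atBot.comp (tendsto_inv_nhdsGT_zero.const_mul_atTop_of_neg hc)).const_mul B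

section LaplaceTail

variable {X : Type*} [MeasurableSpace X] {μ : Measure X} {ℓ : X → ℝ} {ω : ℝ}

lemma norm_setIntegral_mul_exp_div_le {S : Set X} {f : X → ℝ} {C η : ℝ} (hS : MeasurableSet S)
    (hℓS : ∀ x ∈ S, ℓ x ≤ η) (hC : ∀ x, |f x| ≤ C) (hint : Integrable (fun x => exp (ℓ x)) μ)
    (hω0 : 0 < ω) (hω1 : ω ≤ 1) :
    ‖∫ x in S, f x * exp (ℓ x / ω) ∂μ‖ ≤
      C * exp (η * (ω⁻¹ - 1)) * ∫ x in S, exp (ℓ x) ∂μ := by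
  rw [← integral_const_mul]
  refine norm_integral_le_of_norm_le (hint.integrableOn.const_mul _) ?_
  filter_upwards [ae_restrict_mem hS] with x hx
  rw [norm_mul, norm_of_nonneg (exp_pos _).le, Real.norm_eq_abs, mul_assoc]
  exact mul_le_mul (hC x) (exp_div_le_exp_mul_exp (hℓS x hx) hω0 hω1) (exp_pos _).le
    ((abs_nonneg _).trans (hC x))

lemma measureReal_mul_exp_div_le_integral_exp_div {U : Set X} {a : ℝ} (hU : MeasurableSet U)
    (hUfin : μ U ≠ ∞) (hℓU : ∀ x ∈ U, a ≤ ℓ x) (hω : 0 ≤ ω)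
    (hint : Integrable (fun x => exp (ℓ x / ω)) μ) :
    exp (a / ω) * μ.real U ≤ ∫ x, exp (ℓ x / ω) ∂μ :=
  calc exp (a / ω) * μ.real U ≤ ∫ x in U, exp (ℓ x / ω) ∂μ :=
        setIntegral_ge_of_const_le_real hU hUfin
          (fun x hx => exp_le_exp.2 (div_le_div_of_nonneg_right (hℓU x hx) hω)) hint.integrableOn
    _ ≤ ∫ x, exp (ℓ x / ω) ∂μ :=
        setIntegral_le_integral hint (ae_of_all _ fun _ => (exp_pos _).le)

theorem tendsto_setIntegral_mul_exp_div_div_integral_exp_div {S U : Set X} {f : X → ℝ}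
    {C η a : ℝ} (hS : MeasurableSet S) (hℓS : ∀ x ∈ S, ℓ x ≤ η) (hηa : η < a)
    (hU : MeasurableSet U) (hU0 : μ U ≠ 0) (hUfin : μ U ≠ ∞) (hℓU : ∀ x ∈ U, a ≤ ℓ x)
    (hint : ∀ ω, 0 < ω → Integrable (fun x => exp (ℓ x / ω)) μ) (hC : ∀ x, |f x| ≤ C) :
    Tendsto (fun ω => (∫ x in S, f x * exp (ℓ x / ω) ∂μ) / ∫ x, exp (ℓ x / ω) ∂μ)
      (𝓝[>] 0) (𝓝 0) := by
  have hV : 0 < μ.real U := ENNReal.toReal_pos hU0 hUfin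
  have hint₁ : Integrable (fun x => exp (ℓ x)) μ := by simpa using hint 1 one_pos
  refine squeeze_zero_norm' ?_ <| tendsto_mul_exp_div_nhdsGT_zero
    (C * (∫ x in S, exp (ℓ x) ∂μ) * exp (-η) / μ.real U) (sub_neg.2 hηa)
  filter_upwards [Ioo_mem_nhdsGT one_pos] with ω ⟨hω0, hω1⟩
  have hnum := norm_setIntegral_mul_exp_div_le (μ := μ) hS hℓS hC hint₁ hω0 hω1.le
  have hden := measureReal_mul_exp_div_le_integral_exp_div hU hUfin hℓU hω0.le (hint ω hω0)
  have hexp : exp (η * (ω⁻¹ - 1)) = exp (-η) * exp ((η - a) / ω) * exp (a / ω) := by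
    rw [← exp_add, ← exp_add]; congr 1; field_simp; ring
  rw [norm_div, norm_of_nonneg ((by positivity : (0 : ℝ) ≤ _).trans hden)]
  calc _ ≤ C * exp (η * (ω⁻¹ - 1)) * (∫ x in S, exp (ℓ x) ∂μ) / (exp (a / ω) * μ.real U) :=
        div_le_div₀ ((norm_nonneg _).trans hnum) hnum (by positivity) hden
    _ = _ := by rw [hexp]; field_simp

end LaplaceTail

theorem tail_mass_ratio_vanishes_general
    (d I : ℕ) (hI : 1 ≤ I)
    (ℓ : EuclideanSpace ℝ (Fin d) → ℝ) (hcont : Continuous ℓ)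
    (ξs : Fin I → EuclideanSpace ℝ (Fin d))
    (hattain : {ξ | ℓ ξ = 0} = Set.range ξs)
    (hint : ∀ ω : ℝ, 0 < ω → Integrable (fun ξ => Real.exp (ℓ ξ / ω)))
    (ε : ℝ)
    (hout : ∃ η : ℝ, η < 0 ∧ ∀ ξ, ξ ∉ ⋃ i, Metric.ball (ξs i) ε → ℓ ξ ≤ η) :
    ∀ f : EuclideanSpace ℝ (Fin d) → ℝ, Continuous f → (∃ C, ∀ ξ, |f ξ| ≤ C) →
      Tendsto (fun ω : ℝ =>
          (∫ ξ in (⋃ i, Metric.ball (ξs i) ε)ᶜ, f ξ * Real.exp (ℓ ξ / ω)) /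
            ∫ ξ, Real.exp (ℓ ξ / ω))
        (nhdsWithin 0 (Set.Ioi 0)) (nhds 0) := by
  rintro f - ⟨C, hC⟩
  obtain ⟨η, hη, hηle⟩ := hout
  set ξ₁ := ξs ⟨0, hI⟩
  have hmax : ℓ ξ₁ = 0 := hattain.ge ⟨_, rfl⟩
  obtain ⟨r, hr, hball⟩ := Metric.eventually_nhds_iff_ball.1 <|
    hcont.continuousAt.eventually (lt_mem_nhds (show η / 2 < ℓ ξ₁ by linarith))
  exact tendsto_setIntegral_mul_exp_div_div_integral_exp_div
    (isOpen_iUnion fun i => Metric.isOpen_ball).measurableSet.compl hηle (by linarith)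
    Metric.isOpen_ball.measurableSet (Metric.measure_ball_pos volume ξ₁ hr).ne'
    measure_ball_lt_top.ne (fun x hx => (hball x hx).le) hint hC

/-- The mass of the Gibbs measure outside the union of small balls around the global
maximizers vanishes as `ω → 0⁺`: for every continuous bounded `f`,
`(∫_{ℝ^d ∖ K_ε} f e^{ℓ/ω}) / Z(ω) → 0`. -/
theorem tail_mass_ratio_vanishes
    (d I : ℕ) (hI : 1 ≤ I)
    (ℓ : EuclideanSpace ℝ (Fin d) → ℝ) (hcont : Continuous ℓ) (hle : ∀ ξ, ℓ ξ ≤ 0)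
    (ξs : Fin I → EuclideanSpace ℝ (Fin d)) (hinj : Function.Injective ξs)
    (hattain : {ξ | ℓ ξ = 0} = Set.range ξs)
    (hint : ∀ ω : ℝ, 0 < ω → Integrable (fun ξ => Real.exp (ℓ ξ / ω)))
    (ε : ℝ) (hε : 0 < ε)
    (hsep : ∀ i j, i ≠ j → ε < dist (ξs i) (ξs j))
    (hout : ∃ η : ℝ, η < 0 ∧ ∀ ξ, ξ ∉ ⋃ i, Metric.ball (ξs i) ε → ℓ ξ ≤ η) :
    ∀ f : EuclideanSpace ℝ (Fin d) → ℝ, Continuous f → (∃ C, ∀ ξ, |f ξ| ≤ C) →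
      Tendsto (fun ω : ℝ =>
          (∫ ξ in (⋃ i, Metric.ball (ξs i) ε)ᶜ, f ξ * Real.exp (ℓ ξ / ω)) /
            ∫ ξ, Real.exp (ℓ ξ / ω))
        (nhdsWithin 0 (Set.Ioi 0)) (nhds 0) :=
  tail_mass_ratio_vanishes_general d I hI ℓ hcont ξs hattain hint ε hout
end

section
/- (Bonnet's theorem.) Let f : ℝ^d → ℝ be continuously differentiable and suppose there exist constants C, a > 0 such that |f(ξ)| + ‖∇f(ξ)‖ ≤ C exp(a‖ξ‖) for all ξ. Let Σ be a symmetric positive definite d×d matrix. Then the map μ ↦ ∫ f(ξ) N(ξ; μ, Σ) dξ is differentiable on ℝ^d and its gradient at every μ equals ∫ ∇f(ξ) N(ξ; μ, Σ) dξ. -/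
/-!
Since `N(ξ; μ, Σ) = N(ξ - μ; 0, Σ)`, translating by `μ` turns the integral into
`∫ N(η; 0, Σ) f(η + μ) dη`, in which `μ` enters only through `f`, so one may differentiate under
the integral sign. For `μ'` within distance `1` of `μ` the derivative is dominated by
`C e^{a (‖μ‖ + 1)} e^{a ‖η‖} N(η; 0, Σ)`, which is integrable: positive definiteness of `Σ⁻¹`
gives `N(η; 0, Σ) ≤ c e^{-l ‖η‖²}` for some `l > 0`, and a Gaussian beats any exponential.
-/

open MeasureTheory Real Matrix

/-- The Gaussian density on `ℝ^d` with mean `μ` and covariance matrix `Cov`. -/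
noncomputable def gaussDensity (d : ℕ) (μ : Fin d → ℝ) (Cov : Matrix (Fin d) (Fin d) ℝ)
    (ξ : Fin d → ℝ) : ℝ :=
  (2 * Real.pi) ^ (-(d : ℝ) / 2) * Cov.det ^ (-(1/2) : ℝ) *
    Real.exp (-(1/2) * ((ξ - μ) ⬝ᵥ (Cov⁻¹ *ᵥ (ξ - μ))))

theorem exp_mul_sub_mul_sq_le (a r : ℝ) {b : ℝ} (hb : 0 < b) :
    exp (a * r - b * r ^ 2) ≤ exp (a ^ 2 / (2 * b)) * exp (-(b / 2) * r ^ 2) := by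
  rw [← exp_add, exp_le_exp]
  have hsq : a ^ 2 / (2 * b) + -(b / 2) * r ^ 2 - (a * r - b * r ^ 2)
      = (b * r - a) ^ 2 / (2 * b) := by
    field_simp
    ring
  have : 0 ≤ (b * r - a) ^ 2 / (2 * b) := by positivity
  linarith

theorem integrable_exp_neg_mul_sq_norm_pi {ι : Type*} [Fintype ι] {b : ℝ} (hb : 0 < b) :
    Integrable (fun η : ι → ℝ => exp (-b * ‖η‖ ^ 2)) := by
  -- dividing by `card ι + 1` rather than `card ι` avoids a special case for empty `ι`
  set c := b / (Fintype.card ι + 1)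
  have hc : 0 < c := by positivity
  have hprod : Integrable (fun η : ι → ℝ => ∏ i, exp (-c * η i ^ 2)) :=
    Integrable.fintype_prod fun _ => integrable_exp_neg_mul_sq hc
  refine hprod.mono' (by fun_prop) (ae_of_all _ fun η => ?_)
  rw [norm_of_nonneg (exp_pos _).le, ← exp_sum, exp_le_exp, ← Finset.mul_sum]
  have hsum : ∑ i, η i ^ 2 ≤ (Fintype.card ι + 1) * ‖η‖ ^ 2 :=
    calc ∑ i, η i ^ 2 ≤ ∑ _i : ι, ‖η‖ ^ 2 := Finset.sum_le_sum fun i _ => by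
            simpa only [norm_pow, Real.norm_eq_abs, sq_abs] using
              pow_le_pow_left₀ (norm_nonneg _) (norm_le_pi_norm η i) 2
      _ ≤ (Fintype.card ι + 1) * ‖η‖ ^ 2 := by
            rw [Finset.sum_const, Finset.card_univ, nsmul_eq_mul]
            nlinarith [sq_nonneg ‖η‖]
  have hcb : c * (Fintype.card ι + 1) = b := div_mul_cancel₀ _ (by positivity)
  nlinarith [mul_le_mul_of_nonneg_left hsum hc.le]

theorem integrable_exp_mul_norm_sub_mul_sq_norm_pi {ι : Type*} [Fintype ι] (a : ℝ) {b : ℝ}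
    (hb : 0 < b) : Integrable (fun η : ι → ℝ => exp (a * ‖η‖ - b * ‖η‖ ^ 2)) :=
  ((integrable_exp_neg_mul_sq_norm_pi (half_pos hb)).const_mul _).mono' (by fun_prop)
    (ae_of_all _ fun η => by
      rw [norm_of_nonneg (exp_pos _).le]
      exact exp_mul_sub_mul_sq_le _ _ hb)

theorem Matrix.PosDef.exists_pos_mul_sq_norm_le_dotProduct_mulVec {ι : Type*} [Fintype ι]
    {M : Matrix ι ι ℝ} (hM : M.PosDef) : ∃ l > 0, ∀ η : ι → ℝ, l * ‖η‖ ^ 2 ≤ η ⬝ᵥ (M *ᵥ η) := by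
  cases isEmpty_or_nonempty ι
  · exact ⟨1, one_pos, fun η => by simp [Subsingleton.elim η 0]⟩
  set q : (ι → ℝ) → ℝ := fun η => η ⬝ᵥ (M *ᵥ η)
  have hq_smul (t : ℝ) (η : ι → ℝ) : q (t • η) = t ^ 2 * q η := by
    simp only [q, mulVec_smul, smul_dotProduct, dotProduct_smul, smul_eq_mul]
    ring
  obtain ⟨u, hu, hmin⟩ := (isCompact_sphere (0 : ι → ℝ) 1).exists_isMinOn
    (NormedSpace.sphere_nonempty.2 zero_le_one) (by fun_prop : Continuous q).continuousOn
  refine ⟨q u, hM.dotProduct_mulVec_pos (ne_zero_of_mem_unit_sphere ⟨u, hu⟩), fun η => ?_⟩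
  rcases eq_or_ne η 0 with rfl | hη
  · simp [q]
  have hη' : 0 < ‖η‖ := norm_pos_iff.2 hη
  have hle : q u ≤ q (‖η‖⁻¹ • η) := hmin (by simp [norm_smul, hη'.ne'])
  rw [hq_smul, inv_pow, le_inv_mul_iff₀ (by positivity), mul_comm] at hle
  exact hle

section ExponentialGrowth

variable {E F : Type*} [NormedAddCommGroup E] [NormedAddCommGroup F] [NormedSpace ℝ F]

theorem exp_mul_norm_add_le {a r : ℝ} (ha : 0 ≤ a) {y : E} (hy : ‖y‖ ≤ r) (η : E) :
    exp (a * ‖η + y‖) ≤ exp (a * r) * exp (a * ‖η‖) := by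
  rw [← exp_add, exp_le_exp, ← mul_add]
  exact mul_le_mul_of_nonneg_left ((norm_add_le η y).trans (by linarith)) ha

theorem norm_smul_comp_add_le {φ : E → F} {C a r : ℝ} (ha : 0 ≤ a)
    (hφ : ∀ ξ, ‖φ ξ‖ ≤ C * exp (a * ‖ξ‖)) (g : E → ℝ) {y : E} (hy : ‖y‖ ≤ r) (η : E) :
    ‖g η • φ (η + y)‖ ≤ C * exp (a * r) * ‖g η * exp (a * ‖η‖)‖ := by
  have hC : 0 ≤ C := by simpa using (norm_nonneg _).trans (hφ 0)
  rw [norm_smul, norm_mul, norm_of_nonneg (exp_pos _).le]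
  calc ‖g η‖ * ‖φ (η + y)‖ ≤ ‖g η‖ * (C * (exp (a * r) * exp (a * ‖η‖))) := by
        gcongr
        exact (hφ _).trans (mul_le_mul_of_nonneg_left (exp_mul_norm_add_le ha hy η) hC)
    _ = C * exp (a * r) * (‖g η‖ * exp (a * ‖η‖)) := by ring

variable [MeasurableSpace E] [OpensMeasurableSpace E] [SecondCountableTopology E]
  {ν : Measure E} {g : E → ℝ} {C a : ℝ}

theorem integrable_smul_comp_add {φ : E → F} (hφ : Continuous φ) (ha : 0 ≤ a)
    (hφ_le : ∀ ξ, ‖φ ξ‖ ≤ C * exp (a * ‖ξ‖)) (hg : AEStronglyMeasurable g ν)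
    (hg_int : Integrable (fun η => g η * exp (a * ‖η‖)) ν) (y : E) :
    Integrable (fun η => g η • φ (η + y)) ν :=
  (hg_int.norm.const_mul _).mono' (hg.smul (by fun_prop))
    (ae_of_all _ (norm_smul_comp_add_le ha hφ_le g le_rfl))

theorem hasFDerivAt_integral_smul_comp_add [NormedSpace ℝ E] {f : E → F} (hf : ContDiff ℝ 1 f)
    (ha : 0 ≤ a) (hf_le : ∀ ξ, ‖f ξ‖ ≤ C * exp (a * ‖ξ‖))
    (hf'_le : ∀ ξ, ‖fderiv ℝ f ξ‖ ≤ C * exp (a * ‖ξ‖)) (hg : AEStronglyMeasurable g ν)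
    (hg_int : Integrable (fun η => g η * exp (a * ‖η‖)) ν) (x : E) :
    HasFDerivAt (fun x => ∫ η, g η • f (η + x) ∂ν) (∫ η, g η • fderiv ℝ f (η + x) ∂ν) x := by
  have hf' : Continuous (fderiv ℝ f) := hf.continuous_fderiv one_ne_zero
  have hnorm : ∀ y ∈ Metric.ball x 1, ‖y‖ ≤ ‖x‖ + 1 := fun y hy => by
    have := norm_le_norm_add_norm_sub' y x
    have := mem_ball_iff_norm.1 hy
    linarith
  refine hasFDerivAt_integral_of_dominated_of_fderiv_le (Metric.ball_mem_nhds x one_pos)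
    (bound := fun η => C * exp (a * (‖x‖ + 1)) * ‖g η * exp (a * ‖η‖)‖)
    (.of_forall fun y => (integrable_smul_comp_add hf.continuous ha hf_le hg hg_int y).1)
    (integrable_smul_comp_add hf.continuous ha hf_le hg hg_int x)
    (integrable_smul_comp_add hf' ha hf'_le hg hg_int x).1
    (ae_of_all _ fun η y hy => norm_smul_comp_add_le ha hf'_le g (hnorm y hy) η)
    (hg_int.norm.const_mul _) (ae_of_all _ fun η y _ => ?_)
  have hfy : HasFDerivAt f (fderiv ℝ f (η + y)) (η + y) :=
    ((hf.differentiable one_ne_zero) _).hasFDerivAt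
  exact (hfy.comp y ((hasFDerivAt_id y).const_add η)).const_smul (g η)

end ExponentialGrowth

theorem gaussDensity_eq_gaussDensity_zero (d : ℕ) (μ : Fin d → ℝ) (Cov : Matrix (Fin d) (Fin d) ℝ)
    (ξ : Fin d → ℝ) : gaussDensity d μ Cov ξ = gaussDensity d 0 Cov (ξ - μ) := by
  simp only [gaussDensity, sub_zero]

@[fun_prop]
theorem continuous_gaussDensity (d : ℕ) (μ : Fin d → ℝ) (Cov : Matrix (Fin d) (Fin d) ℝ) :
    Continuous (gaussDensity d μ Cov) := by
  unfold gaussDensity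
  fun_prop

theorem integral_mul_gaussDensity {d : ℕ} (F : (Fin d → ℝ) → ℝ) (μ : Fin d → ℝ)
    (Cov : Matrix (Fin d) (Fin d) ℝ) :
    ∫ ξ, F ξ * gaussDensity d μ Cov ξ = ∫ η, gaussDensity d 0 Cov η * F (η + μ) := by
  rw [← integral_add_right_eq_self _ μ]
  simp only [gaussDensity_eq_gaussDensity_zero d μ, add_sub_cancel_right, mul_comm]

theorem integrable_gaussDensity_mul_exp_mul_norm {d : ℕ} {Cov : Matrix (Fin d) (Fin d) ℝ}
    (hCov : Cov.PosDef) (t : ℝ) :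
    Integrable (fun η => gaussDensity d 0 Cov η * exp (t * ‖η‖)) := by
  obtain ⟨l, hl, hquad⟩ := hCov.inv.exists_pos_mul_sq_norm_le_dotProduct_mulVec
  set K : ℝ := (2 * π) ^ (-(d : ℝ) / 2) * Cov.det ^ (-(1 / 2) : ℝ) with hK_def
  have hK : 0 ≤ K := by
    have := hCov.det_pos
    positivity
  refine ((integrable_exp_mul_norm_sub_mul_sq_norm_pi t (half_pos hl)).const_mul K).mono'
    (by fun_prop) (ae_of_all _ fun η => ?_)
  have := hquad η
  rw [gaussDensity, ← hK_def, sub_zero, norm_mul, norm_mul, norm_of_nonneg hK,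
    norm_of_nonneg (exp_pos _).le, norm_of_nonneg (exp_pos _).le, mul_assoc, ← exp_add]
  gcongr
  linarith

/-- Bonnet's theorem: for `f` continuously differentiable with at most exponential
growth of `f` and `∇f`, the map `μ ↦ ∫ f(ξ) N(ξ; μ, Σ) dξ` is differentiable and
its gradient is `∫ ∇f(ξ) N(ξ; μ, Σ) dξ`. -/
theorem bonnet
    (d : ℕ) (f : (Fin d → ℝ) → ℝ) (hf : ContDiff ℝ 1 f)
    (hgrowth : ∃ C > (0:ℝ), ∃ a > (0:ℝ), ∀ ξ,
      |f ξ| + ‖fderiv ℝ f ξ‖ ≤ C * Real.exp (a * ‖ξ‖))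
    (Cov : Matrix (Fin d) (Fin d) ℝ) (hCov : Cov.PosDef) :
    ∀ μ : Fin d → ℝ, ∃ L : (Fin d → ℝ) →L[ℝ] ℝ,
      HasFDerivAt (fun μ' => ∫ ξ, f ξ * gaussDensity d μ' Cov ξ) L μ ∧
      ∀ v, L v = ∫ ξ, fderiv ℝ f ξ v * gaussDensity d μ Cov ξ := by
  obtain ⟨C, -, a, ha, hgrowth⟩ := hgrowth
  have hf_le (ξ) : ‖f ξ‖ ≤ C * exp (a * ‖ξ‖) :=
    le_of_add_le_of_nonneg_left (hgrowth ξ) (norm_nonneg _)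
  have hf'_le (ξ) : ‖fderiv ℝ f ξ‖ ≤ C * exp (a * ‖ξ‖) :=
    le_of_add_le_of_nonneg_right (hgrowth ξ) (abs_nonneg _)
  have hg := (continuous_gaussDensity d 0 Cov).aestronglyMeasurable (μ := volume)
  have hg_int := integrable_gaussDensity_mul_exp_mul_norm hCov a
  intro μ
  refine ⟨∫ η, gaussDensity d 0 Cov η • fderiv ℝ f (η + μ), ?_, fun v => ?_⟩
  · simp only [integral_mul_gaussDensity]
    exact hasFDerivAt_integral_smul_comp_add hf ha.le hf_le hf'_le hg hg_int μ
  · rw [ContinuousLinearMap.integral_apply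
      (integrable_smul_comp_add (hf.continuous_fderiv one_ne_zero) ha.le hf'_le hg hg_int μ),
      integral_mul_gaussDensity]
    rfl
end
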